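/- arXiv:2603.07257 — 2 statements merged into one kernel-verified Lean document; each statement's English description precedes it below -/
import Mathlib

section
/- If 0 ≤ ε_k < 1/2 for all k ∈ ℕ, then the function f is strictly increasing on [0,1]. -/
open Finset

/-- g_{ik}: factors determined by the sequence (ε_k); indices 0-based. -/
noncomputable def gq (ε : ℕ → ℝ) (i : Fin 3) (k : ℕ) : ℝ :=
  if i = 1 then (1 - 2 * ε k) / 3 else (1 + ε k) / 3

/-- δ_{ik}: δ_{0k}=0, δ_{1k}=g_{0k}, δ_{2k}=g_{0k}+g_{1k}. -/
noncomputable def dq (ε : ℕ → ℝ) (i : Fin 3) (k : ℕ) : ℝ :=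
  if i = 0 then 0 else if i = 1 then gq ε 0 k else gq ε 0 k + gq ε 1 k

/-- F((α_k)) = δ_{α_1 1} + Σ_{k≥2} δ_{α_k k} Π_{j=1}^{k-1} g_{α_j j} (0-based indexing). -/
noncomputable def F (ε : ℕ → ℝ) (α : ℕ → Fin 3) : ℝ :=
  ∑' k : ℕ, dq ε (α k) k * ∏ j ∈ Finset.range k, gq ε (α j) j
/-- β_{ik}: β_{0k}=0, β_{1k}=q_{0k}, β_{2k}=q_{0k}+q_{1k}. -/
noncomputable def bq (q : Fin 3 → ℕ → ℝ) (i : Fin 3) (k : ℕ) : ℝ :=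
  if i = 0 then 0 else if i = 1 then q 0 k else q 0 k + q 1 k

/-- The number with Q*_3-digits (α_k): x = β_{α_1 1} + Σ_{k≥2} β_{α_k k} Π_{j=1}^{k-1} q_{α_j j}. -/
noncomputable def Xval (q : Fin 3 → ℕ → ℝ) (α : ℕ → Fin 3) : ℝ :=
  ∑' k : ℕ, bq q (α k) k * ∏ j ∈ Finset.range k, q (α j) j

/- ===================== auxiliary development ===================== -/

open Filter Topology

/-- the k-th term of the expansion -/
noncomputable def tX (q : Fin 3 → ℕ → ℝ) (α : ℕ → Fin 3) (k : ℕ) : ℝ :=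
  bq q (α k) k * ∏ j ∈ Finset.range k, q (α j) j

/-- the cylinder length -/
noncomputable def PP (q : Fin 3 → ℕ → ℝ) (α : ℕ → Fin 3) (k : ℕ) : ℝ :=
  ∏ j ∈ Finset.range k, q (α j) j

lemma Xval_eq (q : Fin 3 → ℕ → ℝ) (α : ℕ → Fin 3) : Xval q α = ∑' k, tX q α k := rfl

lemma tX_eq (q : Fin 3 → ℕ → ℝ) (α : ℕ → Fin 3) (k : ℕ) :
    tX q α k = bq q (α k) k * PP q α k := rfl

lemma PP_pos (q : Fin 3 → ℕ → ℝ) (hq : ∀ i k, 0 < q i k) (α : ℕ → Fin 3) (k : ℕ) :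
    0 < PP q α k :=
  Finset.prod_pos fun j _ => hq _ _

lemma PP_succ (q : Fin 3 → ℕ → ℝ) (α : ℕ → Fin 3) (k : ℕ) :
    PP q α (k + 1) = PP q α k * q (α k) k :=
  Finset.prod_range_succ _ _

lemma PP_zero (q : Fin 3 → ℕ → ℝ) (α : ℕ → Fin 3) : PP q α 0 = 1 :=
  Finset.prod_range_zero _

lemma PP_congr (q : Fin 3 → ℕ → ℝ) (α β : ℕ → Fin 3) (n : ℕ) (h : ∀ k < n, α k = β k) :
    PP q α n = PP q β n :=
  Finset.prod_congr rfl fun j hj => by rw [h j (Finset.mem_range.mp hj)]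

lemma bq_nonneg (q : Fin 3 → ℕ → ℝ) (hq : ∀ i k, 0 < q i k) (i : Fin 3) (k : ℕ) :
    0 ≤ bq q i k := by
  fin_cases i <;> simp [bq] <;> linarith [hq 0 k, hq 1 k]

lemma bq_add_le (q : Fin 3 → ℕ → ℝ) (hq : ∀ i k, 0 < q i k)
    (hsum : ∀ k, q 0 k + q 1 k + q 2 k = 1) (i : Fin 3) (k : ℕ) :
    bq q i k + q i k ≤ 1 := by
  fin_cases i <;> simp [bq] <;> linarith [hsum k, hq 0 k, hq 1 k, hq 2 k]

lemma bq_add_lt (q : Fin 3 → ℕ → ℝ) (hq : ∀ i k, 0 < q i k)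
    (hsum : ∀ k, q 0 k + q 1 k + q 2 k = 1) (i : Fin 3) (k : ℕ) (h : i ≠ 2) :
    bq q i k + q i k < 1 := by
  fin_cases i <;> simp_all [bq] <;> linarith [hsum k, hq 0 k, hq 1 k, hq 2 k]

lemma bq_step (q : Fin 3 → ℕ → ℝ) (hq : ∀ i k, 0 < q i k) (i i' : Fin 3) (h : i < i')
    (k : ℕ) : bq q i k + q i k ≤ bq q i' k := by
  fin_cases i <;> fin_cases i' <;>
    simp_all [Fin.lt_def, bq] <;> linarith [hq 0 k, hq 1 k]

lemma tX_nonneg (q : Fin 3 → ℕ → ℝ) (hq : ∀ i k, 0 < q i k) (α : ℕ → Fin 3) (k : ℕ) :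
    0 ≤ tX q α k :=
  mul_nonneg (bq_nonneg q hq _ _) (PP_pos q hq α k).le

lemma tX_le (q : Fin 3 → ℕ → ℝ) (hq : ∀ i k, 0 < q i k)
    (hsum : ∀ k, q 0 k + q 1 k + q 2 k = 1) (α : ℕ → Fin 3) (k : ℕ) :
    tX q α k ≤ PP q α k - PP q α (k + 1) := by
  rw [tX_eq, PP_succ]
  nlinarith [bq_add_le q hq hsum (α k) k, PP_pos q hq α k]

lemma tX_lt (q : Fin 3 → ℕ → ℝ) (hq : ∀ i k, 0 < q i k)
    (hsum : ∀ k, q 0 k + q 1 k + q 2 k = 1) (α : ℕ → Fin 3) (k : ℕ) (h : α k ≠ 2) :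
    tX q α k < PP q α k - PP q α (k + 1) := by
  rw [tX_eq, PP_succ]
  nlinarith [bq_add_lt q hq hsum (α k) k h, PP_pos q hq α k]

/-- the digit-2 term telescopes exactly -/
lemma tX_eq_two (q : Fin 3 → ℕ → ℝ)
    (hsum : ∀ k, q 0 k + q 1 k + q 2 k = 1) (α : ℕ → Fin 3) (k : ℕ) (h : α k = 2) :
    tX q α k = PP q α k - PP q α (k + 1) := by
  rw [tX_eq, PP_succ, h]
  have : bq q 2 k = 1 - q 2 k := by simp [bq]; linarith [hsum k]
  rw [this]; ring

lemma sum_shift_le (q : Fin 3 → ℕ → ℝ) (hq : ∀ i k, 0 < q i k)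
    (hsum : ∀ k, q 0 k + q 1 k + q 2 k = 1) (α : ℕ → Fin 3) (m N : ℕ) :
    ∑ k ∈ Finset.range N, tX q α (k + m) ≤ PP q α m - PP q α (N + m) := by
  induction N with
  | zero => simp
  | succ N ih =>
    rw [Finset.sum_range_succ]
    have h1 := tX_le q hq hsum α (N + m)
    have h2 : N + 1 + m = (N + m) + 1 := by omega
    rw [h2]
    linarith

lemma sum_shift_eq_two (q : Fin 3 → ℕ → ℝ)
    (hsum : ∀ k, q 0 k + q 1 k + q 2 k = 1) (α : ℕ → Fin 3) (m N : ℕ)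
    (h2 : ∀ j, m ≤ j → α j = 2) :
    ∑ k ∈ Finset.range N, tX q α (k + m) = PP q α m - PP q α (N + m) := by
  induction N with
  | zero => simp
  | succ N ih =>
    rw [Finset.sum_range_succ]
    have h1 := tX_eq_two q hsum α (N + m) (h2 _ (by omega))
    have h3 : N + 1 + m = (N + m) + 1 := by omega
    rw [h3]
    linarith

lemma summable_tX (q : Fin 3 → ℕ → ℝ) (hq : ∀ i k, 0 < q i k)
    (hsum : ∀ k, q 0 k + q 1 k + q 2 k = 1) (α : ℕ → Fin 3) : Summable (tX q α) := by
  apply summable_of_sum_range_le (c := 1) (tX_nonneg q hq α)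
  intro N
  have h1 := sum_shift_le q hq hsum α 0 N
  have h0 : PP q α 0 = 1 := PP_zero q α
  have hN := PP_pos q hq α (N + 0)
  calc ∑ k ∈ Finset.range N, tX q α k = ∑ k ∈ Finset.range N, tX q α (k + 0) := by simp
    _ ≤ PP q α 0 - PP q α (N + 0) := h1
    _ ≤ 1 := by rw [h0]; linarith

lemma summable_tail (q : Fin 3 → ℕ → ℝ) (hq : ∀ i k, 0 < q i k)
    (hsum : ∀ k, q 0 k + q 1 k + q 2 k = 1) (α : ℕ → Fin 3) (m : ℕ) :
    Summable (fun k => tX q α (k + m)) :=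
  (summable_nat_add_iff m).mpr (summable_tX q hq hsum α)

lemma tail_le (q : Fin 3 → ℕ → ℝ) (hq : ∀ i k, 0 < q i k)
    (hsum : ∀ k, q 0 k + q 1 k + q 2 k = 1) (α : ℕ → Fin 3) (m : ℕ) :
    ∑' k, tX q α (k + m) ≤ PP q α m := by
  apply Real.tsum_le_of_sum_range_le (fun k => tX_nonneg q hq α _)
  intro N
  have h1 := sum_shift_le q hq hsum α m N
  have hN := PP_pos q hq α (N + m)
  linarith

lemma tail_nonneg (q : Fin 3 → ℕ → ℝ) (hq : ∀ i k, 0 < q i k) (α : ℕ → Fin 3) (m : ℕ) :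
    0 ≤ ∑' k, tX q α (k + m) :=
  tsum_nonneg fun k => tX_nonneg q hq α _

lemma Xval_split (q : Fin 3 → ℕ → ℝ) (hq : ∀ i k, 0 < q i k)
    (hsum : ∀ k, q 0 k + q 1 k + q 2 k = 1) (α : ℕ → Fin 3) (m : ℕ) :
    Xval q α = (∑ k ∈ Finset.range m, tX q α k) + ∑' k, tX q α (k + m) := by
  rw [Xval_eq]
  exact (Summable.sum_add_tsum_nat_add m (summable_tX q hq hsum α)).symm

/-- lexicographic monotonicity (non-strict) -/
lemma Xval_le_of_lex (q : Fin 3 → ℕ → ℝ) (hq : ∀ i k, 0 < q i k)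
    (hsum : ∀ k, q 0 k + q 1 k + q 2 k = 1) (α β : ℕ → Fin 3) (n : ℕ)
    (hpre : ∀ k < n, α k = β k) (hn : α n < β n) : Xval q α ≤ Xval q β := by
  have hPeq : ∀ k, k ≤ n → PP q α k = PP q β k := fun k hk =>
    PP_congr q α β k (fun j hj => hpre j (lt_of_lt_of_le hj hk))
  have hteq : ∀ k ∈ Finset.range n, tX q α k = tX q β k := fun k hk => by
    rw [tX_eq, tX_eq, hpre k (Finset.mem_range.mp hk),
      hPeq k (Finset.mem_range.mp hk).le]
  rw [Xval_split q hq hsum α (n + 1), Xval_split q hq hsum β (n + 1),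
    Finset.sum_range_succ, Finset.sum_range_succ, Finset.sum_congr rfl hteq]
  have h1 : ∑' k, tX q α (k + (n + 1)) ≤ PP q α (n + 1) := tail_le q hq hsum α (n + 1)
  have h2 : 0 ≤ ∑' k, tX q β (k + (n + 1)) := tail_nonneg q hq β (n + 1)
  have h3 : tX q α n + PP q α (n + 1) ≤ tX q β n := by
    rw [tX_eq, tX_eq, PP_succ, hPeq n le_rfl]
    have hb := bq_step q hq (α n) (β n) hn n
    nlinarith [PP_pos q hq β n]
  linarith

/-- tail equal to zero forces all later digits zero -/
lemma digits_zero (q : Fin 3 → ℕ → ℝ) (hq : ∀ i k, 0 < q i k)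
    (hsum : ∀ k, q 0 k + q 1 k + q 2 k = 1) (α : ℕ → Fin 3) (m : ℕ)
    (h0 : ∑' k, tX q α (k + m) = 0) : ∀ j, m ≤ j → α j = 0 := by
  intro j hj
  have hterm : tX q α ((j - m) + m) ≤ 0 := by
    rw [← h0]
    exact Summable.le_tsum (summable_tail q hq hsum α m) (j - m) fun k _ => tX_nonneg q hq α _
  have hjm : (j - m) + m = j := by omega
  rw [hjm] at hterm
  have h1 : tX q α j = 0 := le_antisymm hterm (tX_nonneg q hq α j)
  rw [tX_eq] at h1
  have hP := PP_pos q hq α j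
  have hb : bq q (α j) j = 0 := by
    rcases mul_eq_zero.mp h1 with h | h
    · exact h
    · exact absurd h hP.ne'
  obtain ⟨i, hi⟩ : ∃ i, α j = i := ⟨_, rfl⟩
  rw [hi] at hb ⊢
  fin_cases i
  · rfl
  · simp [bq] at hb; linarith [hq 0 j]
  · simp [bq] at hb; linarith [hq 0 j, hq 1 j]

/-- tail equal to the full cylinder forces all later digits 2 -/
lemma digits_two (q : Fin 3 → ℕ → ℝ) (hq : ∀ i k, 0 < q i k)
    (hsum : ∀ k, q 0 k + q 1 k + q 2 k = 1) (α : ℕ → Fin 3) (m : ℕ)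
    (hT : ∑' k, tX q α (k + m) = PP q α m) : ∀ j, m ≤ j → α j = 2 := by
  intro j hj
  by_contra hne
  set r := j - m with hr
  have hjm : r + m = j := by omega
  have hsplit : ∑' k, tX q α (k + m)
      = (∑ k ∈ Finset.range (r + 1), tX q α (k + m)) + ∑' k, tX q α (k + (j + 1)) := by
    have h4 := (Summable.sum_add_tsum_nat_add (r + 1) (summable_tail q hq hsum α m)).symm
    rw [h4]
    congr 1
    apply tsum_congr
    intro k
    congr 1
    omega
  have h1 : ∑ k ∈ Finset.range r, tX q α (k + m) ≤ PP q α m - PP q α j := by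
    have h5 := sum_shift_le q hq hsum α m r
    rw [hjm] at h5; exact h5
  have h2 : tX q α j < PP q α j - PP q α (j + 1) := tX_lt q hq hsum α j hne
  have h3 : ∑' k, tX q α (k + (j + 1)) ≤ PP q α (j + 1) := tail_le q hq hsum α (j + 1)
  rw [Finset.sum_range_succ, hjm] at hsplit
  rw [hsplit] at hT
  linarith

/-- If some sequence represents 1, then the cylinder ∏_{j<M} q 2 j tends to 0. -/
lemma Q_tendsto_zero (q : Fin 3 → ℕ → ℝ) (hq : ∀ i k, 0 < q i k)
    (hsum : ∀ k, q 0 k + q 1 k + q 2 k = 1) (β : ℕ → Fin 3) (hβ : Xval q β = 1) :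
    Tendsto (fun M => ∏ j ∈ Finset.range M, q 2 j) atTop (𝓝 0) := by
  classical
  set two : ℕ → Fin 3 := fun _ => 2 with htwo
  have hQ : ∀ M, PP q two M = ∏ j ∈ Finset.range M, q 2 j := fun M => rfl
  have hle : Xval q β ≤ Xval q two := by
    by_cases h : ∀ k, β k = 2
    · have hbe : β = two := funext h
      rw [hbe]
    · push_neg at h
      set m := Nat.find h with hm
      have hms : β m ≠ 2 := Nat.find_spec h
      have hpre : ∀ k < m, β k = two k := fun k hk => not_not.mp (Nat.find_min h hk)
      have hlt : β m < two m := by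
        have h3 := (β m).isLt
        have hne2 : (β m).val ≠ 2 := fun hc => hms (Fin.ext hc)
        show (β m).val < (2 : Fin 3).val
        simp only [Fin.val_two]
        omega
      exact Xval_le_of_lex q hq hsum β two m hpre hlt
  have h2le : Xval q two ≤ 1 := by
    rw [Xval_eq]
    apply Real.tsum_le_of_sum_range_le (fun k => tX_nonneg q hq two k)
    intro N
    have h1 := sum_shift_le q hq hsum two 0 N
    have h0 : PP q two 0 = 1 := PP_zero q two
    have hN := PP_pos q hq two (N + 0)
    calc ∑ k ∈ Finset.range N, tX q two k = ∑ k ∈ Finset.range N, tX q two (k + 0) := by simp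
      _ ≤ PP q two 0 - PP q two (N + 0) := h1
      _ ≤ 1 := by rw [h0]; linarith
  have h2eq : Xval q two = 1 := le_antisymm h2le (hβ ▸ hle)
  have hpart : ∀ N, ∑ k ∈ Finset.range N, tX q two k = 1 - PP q two N := by
    intro N
    have h6 := sum_shift_eq_two q hsum two 0 N (fun j _ => rfl)
    rw [PP_zero] at h6
    calc ∑ k ∈ Finset.range N, tX q two k = ∑ k ∈ Finset.range N, tX q two (k + 0) := by simp
      _ = 1 - PP q two (N + 0) := h6
      _ = 1 - PP q two N := by rw [Nat.add_zero]
  have hts := (summable_tX q hq hsum two).hasSum.tendsto_sum_nat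
  rw [← Xval_eq, h2eq] at hts
  have hts' : Tendsto (fun N => 1 - PP q two N) atTop (𝓝 1) := by
    simpa [hpart] using hts
  have hfin : Tendsto (fun N => 1 - (1 - PP q two N)) atTop (𝓝 (1 - 1)) :=
    tendsto_const_nhds.sub hts'
  simp only [sub_sub_cancel, sub_self] at hfin
  simpa [hQ] using hfin

/-- all-2 tail: the tail sum is at least the full cylinder (needs cylinders → 0) -/
lemma tail_two_ge (q : Fin 3 → ℕ → ℝ) (hq : ∀ i k, 0 < q i k)
    (hsum : ∀ k, q 0 k + q 1 k + q 2 k = 1) (α : ℕ → Fin 3) (m : ℕ)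
    (h2 : ∀ j, m ≤ j → α j = 2)
    (hQ0 : Tendsto (fun M => ∏ j ∈ Finset.range M, q 2 j) atTop (𝓝 0)) :
    PP q α m ≤ ∑' k, tX q α (k + m) := by
  have hQm : (0:ℝ) < ∏ j ∈ Finset.range m, q 2 j := Finset.prod_pos fun j _ => hq _ _
  have hPPeq : ∀ N, PP q α (N + m) * (∏ j ∈ Finset.range m, q 2 j)
      = PP q α m * ∏ j ∈ Finset.range (N + m), q 2 j := by
    intro N
    have e1 : PP q α (N + m) = PP q α m * ∏ i ∈ Finset.range N, q (α (m + i)) (m + i) := by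
      rw [add_comm N m]
      exact Finset.prod_range_add _ _ _
    have e2 : (∏ j ∈ Finset.range (N + m), q 2 j)
        = (∏ j ∈ Finset.range m, q 2 j) * ∏ i ∈ Finset.range N, q 2 (m + i) := by
      rw [add_comm N m]
      exact Finset.prod_range_add _ _ _
    have e3 : (∏ i ∈ Finset.range N, q (α (m + i)) (m + i))
        = ∏ i ∈ Finset.range N, q 2 (m + i) :=
      Finset.prod_congr rfl fun i _ => by rw [h2 (m + i) (by omega)]
    rw [e1, e2, e3]; ring
  have hQshift : Tendsto (fun N => ∏ j ∈ Finset.range (N + m), q 2 j) atTop (𝓝 0) :=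
    (tendsto_add_atTop_iff_nat m).mpr hQ0
  have hPP0 : Tendsto (fun N => PP q α (N + m)) atTop (𝓝 0) := by
    have hc : Tendsto (fun N => (PP q α m / ∏ j ∈ Finset.range m, q 2 j)
        * ∏ j ∈ Finset.range (N + m), q 2 j) atTop (𝓝 0) := by
      have := hQshift.const_mul (PP q α m / ∏ j ∈ Finset.range m, q 2 j)
      simpa using this
    apply hc.congr
    intro N
    rw [div_mul_eq_mul_div, div_eq_iff hQm.ne']
    linarith [hPPeq N]
  have hbound : ∀ N, PP q α m - PP q α (N + m) ≤ ∑' k, tX q α (k + m) := by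
    intro N
    have heq := sum_shift_eq_two q hsum α m N h2
    rw [← heq]
    exact Summable.sum_le_tsum (Finset.range N) (fun k _ => tX_nonneg q hq α _)
      (summable_tail q hq hsum α m)
  have hlim : Tendsto (fun N => PP q α m - PP q α (N + m)) atTop (𝓝 (PP q α m - 0)) :=
    tendsto_const_nhds.sub hPP0
  rw [sub_zero] at hlim
  exact le_of_tendsto hlim (Filter.Eventually.of_forall hbound)

/-- all-0 tail: the tail sum is zero -/
lemma tail_zero (q : Fin 3 → ℕ → ℝ) (α : ℕ → Fin 3) (m : ℕ)
    (h0 : ∀ j, m ≤ j → α j = 0) : ∑' k, tX q α (k + m) = 0 := by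
  have hz : ∀ k, tX q α (k + m) = 0 := by
    intro k
    rw [tX_eq, h0 (k + m) (by omega)]
    simp [bq]
  simp [hz]

/-- on the g side, dq-equality at a jump forces a "successor digit" on the q side -/
lemma digit_succ (q : Fin 3 → ℕ → ℝ) (G : Fin 3 → ℕ → ℝ) (n : ℕ) (hG1 : 0 < G 1 n)
    (i i' : Fin 3) (h : i < i') (hgC : bq G i n + G i n = bq G i' n) :
    bq q i' n = bq q i n + q i n := by
  fin_cases i <;> fin_cases i' <;>
    simp_all [Fin.lt_def, bq] <;> linarith

lemma F_eq_Xval (ε : ℕ → ℝ) (α : ℕ → Fin 3) :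
    F ε α = Xval (fun i k => gq ε i k) α := by
  unfold F Xval
  apply tsum_congr
  intro k
  congr 1

theorem stmt11 (q : Fin 3 → ℕ → ℝ) (hq : ∀ i k, 0 < q i k)
    (hsum : ∀ k, q 0 k + q 1 k + q 2 k = 1)
    (ε : ℕ → ℝ) (hε : ∀ k, 0 ≤ ε k ∧ ε k < 1 / 2)
    (α : ℝ → ℕ → Fin 3) (hα : ∀ x ∈ Set.Icc (0 : ℝ) 1, Xval q (α x) = x) :
    StrictMonoOn (fun x => F ε (α x)) (Set.Icc (0 : ℝ) 1) := by
  classical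
  set G : Fin 3 → ℕ → ℝ := fun i k => gq ε i k with hGdef
  have hG : ∀ i k, 0 < G i k := by
    intro i k
    obtain ⟨h1, h2⟩ := hε k
    fin_cases i <;> simp [hGdef, gq] <;> linarith
  have hGsum : ∀ k, G 0 k + G 1 k + G 2 k = 1 := by
    intro k
    simp [hGdef, gq]
    ring
  have hone : Xval q (α 1) = 1 := hα 1 (by norm_num)
  have hQ0 : Tendsto (fun M => ∏ j ∈ Finset.range M, q 2 j) atTop (𝓝 0) :=
    Q_tendsto_zero q hq hsum (α 1) hone
  intro x hx y hy hxy
  have hxa : Xval q (α x) = x := hα x hx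
  have hyb : Xval q (α y) = y := hα y hy
  set a := α x with ha
  set b := α y with hb
  have hne : a ≠ b := by
    intro h
    rw [← hxa, ← hyb, h] at hxy
    exact lt_irrefl _ hxy
  have hex : ∃ n, a n ≠ b n := Function.ne_iff.mp hne
  set n := Nat.find hex with hn
  have hnab : a n ≠ b n := Nat.find_spec hex
  have hpre : ∀ k < n, a k = b k := fun k hk => not_not.mp (Nat.find_min hex hk)
  have hab : a n < b n := by
    rcases lt_or_gt_of_ne hnab with h | h
    · exact h
    · exfalso
      have hxy' := Xval_le_of_lex q hq hsum b a n (fun k hk => (hpre k hk).symm) h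
      rw [hxa, hyb] at hxy'
      linarith
  show F ε a < F ε b
  rw [F_eq_Xval, F_eq_Xval]
  by_contra hFC
  push_neg at hFC
  have hPeqG : PP G a n = PP G b n := PP_congr G a b n hpre
  have hteqG : ∀ k ∈ Finset.range n, tX G a k = tX G b k := fun k hk => by
    rw [tX_eq, tX_eq, hpre k (Finset.mem_range.mp hk),
      PP_congr G a b k (fun j hj => hpre j (lt_of_lt_of_le hj (Finset.mem_range.mp hk).le))]
  have hsplitA := Xval_split G hG hGsum a (n + 1)
  have hsplitB := Xval_split G hG hGsum b (n + 1)
  rw [Finset.sum_range_succ] at hsplitA hsplitB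
  set TA := ∑' k, tX G a (k + (n + 1)) with hTA
  set TB := ∑' k, tX G b (k + (n + 1)) with hTB
  have I1 : TA ≤ PP G a (n + 1) := tail_le G hG hGsum a (n + 1)
  have I2 : 0 ≤ TB := tail_nonneg G hG b (n + 1)
  have I3 : bq G (a n) n + G (a n) n ≤ bq G (b n) n := bq_step G hG (a n) (b n) hab n
  have hPn := PP_pos G hG a n
  have hPsucc : PP G a (n + 1) = PP G a n * G (a n) n := PP_succ G a n
  have hlin : bq G (b n) n * PP G a n + TB ≤ bq G (a n) n * PP G a n + TA := by
    have e1 : tX G a n = bq G (a n) n * PP G a n := tX_eq G a n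
    have e2 : tX G b n = bq G (b n) n * PP G a n := by rw [tX_eq, hPeqG]
    rw [hsplitA, hsplitB, Finset.sum_congr rfl hteqG, e1, e2] at hFC
    linarith
  have hDP : 0 ≤ (bq G (b n) n - bq G (a n) n - G (a n) n) * PP G a n :=
    mul_nonneg (by linarith) hPn.le
  have hBzero : TB = 0 := by
    apply le_antisymm _ I2
    nlinarith
  have hAeq : TA = PP G a (n + 1) := by
    apply le_antisymm I1
    nlinarith
  have hCeq : bq G (a n) n + G (a n) n = bq G (b n) n := by
    nlinarith
  have ha2 : ∀ j, n + 1 ≤ j → a j = 2 :=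
    digits_two G hG hGsum a (n + 1) (hTA ▸ hAeq)
  have hb0 : ∀ j, n + 1 ≤ j → b j = 0 :=
    digits_zero G hG hGsum b (n + 1) (hTB ▸ hBzero)
  have hqsucc : bq q (b n) n = bq q (a n) n + q (a n) n :=
    digit_succ q G n (hG 1 n) (a n) (b n) hab hCeq
  have hPeqq : PP q a n = PP q b n := PP_congr q a b n hpre
  have hteqq : ∀ k ∈ Finset.range n, tX q a k = tX q b k := fun k hk => by
    rw [tX_eq, tX_eq, hpre k (Finset.mem_range.mp hk),
      PP_congr q a b k (fun j hj => hpre j (lt_of_lt_of_le hj (Finset.mem_range.mp hk).le))]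
  have hXa : (∑ k ∈ Finset.range n, tX q a k) + bq q (a n) n * PP q a n
      + PP q a (n + 1) ≤ x := by
    rw [← hxa, Xval_split q hq hsum a (n + 1), Finset.sum_range_succ, tX_eq]
    have hge := tail_two_ge q hq hsum a (n + 1) ha2 hQ0
    linarith
  have hXb : y = (∑ k ∈ Finset.range n, tX q b k) + bq q (b n) n * PP q b n := by
    rw [← hyb, Xval_split q hq hsum b (n + 1), Finset.sum_range_succ, tX_eq,
      tail_zero q b (n + 1) hb0]
    ring
  have hPsuccq : PP q a (n + 1) = PP q a n * q (a n) n := PP_succ q a n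
  have hyx : y ≤ x := by
    rw [hXb, ← Finset.sum_congr rfl hteqq, ← hPeqq, hqsucc]
    calc (∑ k ∈ Finset.range n, tX q a k) + (bq q (a n) n + q (a n) n) * PP q a n
        = (∑ k ∈ Finset.range n, tX q a k) + bq q (a n) n * PP q a n
          + PP q a (n + 1) := by rw [hPsuccq]; ring
      _ ≤ x := hXa
  linarith
end

section
/- Let μ_m = Π_{j=1}^m g_{c_j j} be the increment of f on the cylinder Δ^{Q*_3}_{c_1...c_m}. Then f attains its maximum and minimum over the cylinder at its endpoints: if μ_m > 0 then max f = f(Δ_{c_1...c_m(2)}) and min f = f(Δ_{c_1...c_m(0)}); if μ_m < 0 then max f = f(Δ_{c_1...c_m(0)}) and min f = f(Δ_{c_1...c_m(2)}). -/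
open Finset

/-!
Both `Xval q β` and `F ε β` are series `∑ₖ dₖ ∏_{j<k} gⱼ` in which every affine map `t ↦ dₖ + gₖ t`
sends `[0,1]` into itself; hence both take values in `[0,1]` and satisfy the one-step recursion
`S(β) = d₀ + g₀ · S(tail β)`. Peeling off one digit at a time, a point of `[x₀, x₂]` either has an
expansion starting with `c₀ … c_{m-1}`, and then `f x = f x₀ + μ · F(tail)` with `F(tail) ∈ [0,1]`,
or it is one of the endpoints. The two expansions `… i 2 2 2 …` and `… (i+1) 0 0 0 …` of a point
give the same value of `F` because `δᵢ + gᵢ = δᵢ₊₁`, `F(2 2 2 …) = 1` and `F(0 0 0 …) = 0`, so `f`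
does not depend on which expansion `α` picks.
-/

open Filter Topology

noncomputable def digitTerm (d g : ℕ → ℝ) (k : ℕ) : ℝ := d k * ∏ j ∈ range k, g j

noncomputable def digitSeries (d g : ℕ → ℝ) : ℝ := ∑' k, digitTerm d g k

section digitSeries

variable {d g : ℕ → ℝ}

theorem digitSeries_eq_add_mul (hs : Summable (digitTerm d g)) :
    digitSeries d g = d 0 + g 0 * digitSeries (fun k => d (k + 1)) (fun k => g (k + 1)) := by
  rw [digitSeries, hs.tsum_eq_zero_add, digitSeries, ← tsum_mul_left]
  simp only [digitTerm, range_zero, prod_empty, mul_one, prod_range_succ']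
  congr 2 with k
  ring

theorem add_mul_mem_Icc_zero_one {a b t : ℝ} (ha : a ∈ Set.Icc (0 : ℝ) 1)
    (hab : a + b ∈ Set.Icc (0 : ℝ) 1) (ht : t ∈ Set.Icc (0 : ℝ) 1) :
    a + b * t ∈ Set.Icc (0 : ℝ) 1 := by
  simpa [mul_comm] using (convex_Icc (0 : ℝ) 1).add_smul_sub_mem ha hab ht

theorem sum_digitTerm_add_prod_mul_mem_Icc
    (hdg : ∀ k, d k ∈ Set.Icc (0 : ℝ) 1 ∧ d k + g k ∈ Set.Icc (0 : ℝ) 1)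
    (n : ℕ) {t : ℝ} (ht : t ∈ Set.Icc (0 : ℝ) 1) :
    ∑ k ∈ range n, digitTerm d g k + (∏ j ∈ range n, g j) * t ∈ Set.Icc (0 : ℝ) 1 := by
  induction n generalizing t with
  | zero => simpa using ht
  | succ n ih =>
    convert ih (add_mul_mem_Icc_zero_one (hdg n).1 (hdg n).2 ht) using 1
    simp only [sum_range_succ, prod_range_succ, digitTerm]
    ring

theorem sum_digitTerm_mem_Icc
    (hdg : ∀ k, d k ∈ Set.Icc (0 : ℝ) 1 ∧ d k + g k ∈ Set.Icc (0 : ℝ) 1)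
    (n : ℕ) : ∑ k ∈ range n, digitTerm d g k ∈ Set.Icc (0 : ℝ) 1 := by
  simpa using sum_digitTerm_add_prod_mul_mem_Icc hdg n (t := 0) ⟨le_rfl, zero_le_one⟩

theorem digitSeries_mem_Icc
    (hdg : ∀ k, d k ∈ Set.Icc (0 : ℝ) 1 ∧ d k + g k ∈ Set.Icc (0 : ℝ) 1)
    (hs : Summable (digitTerm d g)) : digitSeries d g ∈ Set.Icc (0 : ℝ) 1 :=
  isClosed_Icc.mem_of_tendsto hs.hasSum.tendsto_sum_nat
    (Eventually.of_forall (sum_digitTerm_mem_Icc hdg))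

theorem summable_digitTerm_of_nonneg
    (hdg : ∀ k, d k ∈ Set.Icc (0 : ℝ) 1 ∧ d k + g k ∈ Set.Icc (0 : ℝ) 1)
    (hg : ∀ k, 0 ≤ g k) : Summable (digitTerm d g) :=
  summable_of_sum_range_le (fun k => mul_nonneg (hdg k).1.1 (prod_nonneg fun j _ => hg j))
    fun n => (sum_digitTerm_mem_Icc hdg n).2

theorem abs_prod_range_le_pow {r : ℝ} (hg : ∀ k, |g k| ≤ r) (n : ℕ) :
    |∏ j ∈ range n, g j| ≤ r ^ n := by
  calc |∏ j ∈ range n, g j| = ∏ j ∈ range n, |g j| := abs_prod _ _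
    _ ≤ ∏ _j ∈ range n, r := prod_le_prod (fun j _ => abs_nonneg _) fun j _ => hg j
    _ = r ^ n := by rw [prod_const, card_range]

theorem summable_digitTerm_of_abs_le {C r : ℝ} (hd : ∀ k, |d k| ≤ C) (hg : ∀ k, |g k| ≤ r)
    (hr : r < 1) : Summable (digitTerm d g) := by
  refine Summable.of_norm_bounded
    ((summable_geometric_of_lt_one ((abs_nonneg _).trans (hg 0)) hr).mul_left C) fun k => ?_
  rw [Real.norm_eq_abs, digitTerm, abs_mul]
  exact mul_le_mul (hd k) (abs_prod_range_le_pow hg k) (abs_nonneg _)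
    ((abs_nonneg _).trans (hd k))

theorem digitSeries_eq_one_of_add_eq_one {r : ℝ} (h : ∀ k, d k + g k = 1)
    (hg : ∀ k, |g k| ≤ r) (hr : r < 1) : digitSeries d g = 1 := by
  have hpartial : ∀ n, ∑ k ∈ range n, digitTerm d g k = 1 - ∏ j ∈ range n, g j := by
    intro n
    induction n with
    | zero => simp
    | succ n ih =>
      rw [sum_range_succ, prod_range_succ, ih, digitTerm, show d n = 1 - g n by linarith [h n]]
      ring
  have hprod : Tendsto (fun n => ∏ j ∈ range n, g j) atTop (𝓝 0) :=
    squeeze_zero_norm (abs_prod_range_le_pow hg)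
      (tendsto_pow_atTop_nhds_zero_of_lt_one ((abs_nonneg _).trans (hg 0)) hr)
  have hd : ∀ k, |d k| ≤ 1 + r := fun k => by
    rw [show d k = 1 - g k by linarith [h k]]
    exact (abs_sub _ _).trans (by simpa using hg k)
  refine tendsto_nhds_unique (summable_digitTerm_of_abs_le hd hg hr).hasSum.tendsto_sum_nat ?_
  simpa [hpartial] using hprod.const_sub 1

end digitSeries

section F

variable {ε : ℕ → ℝ}

theorem dq_mem_Icc (hε : ∀ k, ε k ∈ Set.Icc (0 : ℝ) 1) (i : Fin 3) (k : ℕ) :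
    dq ε i k ∈ Set.Icc (0 : ℝ) 1 ∧ dq ε i k + gq ε i k ∈ Set.Icc (0 : ℝ) 1 := by
  obtain ⟨h0, h1⟩ := hε k
  refine ⟨⟨?_, ?_⟩, ?_, ?_⟩ <;> fin_cases i <;> simp [dq, gq] <;> linarith

theorem abs_gq_le (hε : ∀ k, ε k ∈ Set.Icc (0 : ℝ) 1) (i : Fin 3) (k : ℕ) :
    |gq ε i k| ≤ 2 / 3 := by
  obtain ⟨h0, h1⟩ := hε k
  fin_cases i <;> simp [gq, abs_le] <;> constructor <;> linarith

theorem summable_F (hε : ∀ k, ε k ∈ Set.Icc (0 : ℝ) 1) (a : ℕ → Fin 3) :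
    Summable (digitTerm (fun k => dq ε (a k) k) (fun k => gq ε (a k) k)) :=
  have hd k := (dq_mem_Icc hε (a k) k).1
  summable_digitTerm_of_abs_le (fun k => (abs_of_nonneg (hd k).1).trans_le (hd k).2)
    (fun k => abs_gq_le hε (a k) k) (by norm_num)

theorem F_mem_Icc (hε : ∀ k, ε k ∈ Set.Icc (0 : ℝ) 1) (a : ℕ → Fin 3) :
    F ε a ∈ Set.Icc (0 : ℝ) 1 :=
  digitSeries_mem_Icc (fun k => dq_mem_Icc hε (a k) k) (summable_F hε a)

theorem F_eq_add_mul (hε : ∀ k, ε k ∈ Set.Icc (0 : ℝ) 1) (a : ℕ → Fin 3) :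
    F ε a = dq ε (a 0) 0 + gq ε (a 0) 0 * F (fun k => ε (k + 1)) (fun k => a (k + 1)) :=
  digitSeries_eq_add_mul (summable_F hε a)

theorem F_const_zero : F ε (fun _ => 0) = 0 := by
  simp [F, dq]

theorem F_const_two (hε : ∀ k, ε k ∈ Set.Icc (0 : ℝ) 1) : F ε (fun _ => 2) = 1 :=
  digitSeries_eq_one_of_add_eq_one (fun k => by simp [dq, gq]; ring)
    (fun k => abs_gq_le hε 2 k) (by norm_num)

end F

structure IsPosStochastic (q : Fin 3 → ℕ → ℝ) : Prop where
  pos : ∀ i k, 0 < q i k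
  sum_eq_one : ∀ k, q 0 k + q 1 k + q 2 k = 1

section Xval

variable {q : Fin 3 → ℕ → ℝ} {β γ : ℕ → Fin 3}

theorem IsPosStochastic.shift (hq : IsPosStochastic q) : IsPosStochastic fun i k => q i (k + 1) :=
  ⟨fun i k => hq.pos i (k + 1), fun k => hq.sum_eq_one (k + 1)⟩

theorem bq_mem_Icc (hq : IsPosStochastic q) (i : Fin 3) (k : ℕ) :
    bq q i k ∈ Set.Icc (0 : ℝ) 1 ∧ bq q i k + q i k ∈ Set.Icc (0 : ℝ) 1 := by
  have := hq.pos 0 k; have := hq.pos 1 k; have := hq.pos 2 k; have := hq.sum_eq_one k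
  refine ⟨⟨?_, ?_⟩, ?_, ?_⟩ <;> fin_cases i <;> simp [bq] <;> linarith

theorem bq_add_le_bq (hq : IsPosStochastic q) {i j : Fin 3} (hij : i < j) (k : ℕ) :
    bq q i k + q i k ≤ bq q j k := by
  have := hq.pos 1 k
  fin_cases i <;> fin_cases j <;> simp_all [bq]
  all_goals linarith

theorem dq_add_gq_eq_of_bq_add_eq (hq : IsPosStochastic q) (ε : ℕ → ℝ) {i j : Fin 3}
    (hij : i < j) {k : ℕ} (h : bq q i k + q i k = bq q j k) :
    dq ε i k + gq ε i k = dq ε j k := by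
  have := hq.pos 1 k
  fin_cases i <;> fin_cases j <;> simp_all [bq, dq, gq]

theorem eq_two_of_bq_add_eq_one (hq : IsPosStochastic q) {i : Fin 3} {k : ℕ}
    (h : bq q i k + q i k = 1) : i = 2 := by
  have := hq.pos 1 k; have := hq.pos 2 k; have := hq.sum_eq_one k
  fin_cases i <;> simp_all [bq]
  all_goals linarith

theorem eq_zero_of_bq_eq_zero (hq : IsPosStochastic q) {i : Fin 3} {k : ℕ} (h : bq q i k = 0) :
    i = 0 := by
  have := hq.pos 0 k; have := hq.pos 1 k
  fin_cases i <;> simp_all [bq]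
  all_goals linarith

theorem summable_Xval (hq : IsPosStochastic q) (β : ℕ → Fin 3) :
    Summable (digitTerm (fun k => bq q (β k) k) (fun k => q (β k) k)) :=
  summable_digitTerm_of_nonneg (fun k => bq_mem_Icc hq (β k) k) fun k => (hq.pos (β k) k).le

theorem Xval_mem_Icc (hq : IsPosStochastic q) (β : ℕ → Fin 3) : Xval q β ∈ Set.Icc (0 : ℝ) 1 :=
  digitSeries_mem_Icc (fun k => bq_mem_Icc hq (β k) k) (summable_Xval hq β)

theorem Xval_eq_add_mul (hq : IsPosStochastic q) (β : ℕ → Fin 3) :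
    Xval q β = bq q (β 0) 0 + q (β 0) 0 * Xval (fun i k => q i (k + 1)) (fun k => β (k + 1)) :=
  digitSeries_eq_add_mul (summable_Xval hq β)

theorem eq_two_of_Xval_eq_one (hq : IsPosStochastic q) (h : Xval q β = 1) (j : ℕ) : β j = 2 := by
  have step : ∀ {q : Fin 3 → ℕ → ℝ} {β : ℕ → Fin 3}, IsPosStochastic q → Xval q β = 1 →
      bq q (β 0) 0 + q (β 0) 0 = 1 ∧ Xval (fun i k => q i (k + 1)) (fun k => β (k + 1)) = 1 := by
    intro q β hq h
    rw [Xval_eq_add_mul hq] at h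
    have hs := Xval_mem_Icc hq.shift (fun k => β (k + 1))
    have hb := (bq_mem_Icc hq (β 0) 0).2.2
    have hp := hq.pos (β 0) 0
    constructor <;> nlinarith [hs.1, hs.2]
  induction j generalizing q β with
  | zero => exact eq_two_of_bq_add_eq_one hq (step hq h).1
  | succ j ih => exact ih hq.shift (step hq h).2

theorem eq_zero_of_Xval_eq_zero (hq : IsPosStochastic q) (h : Xval q β = 0) (j : ℕ) :
    β j = 0 := by
  have step : ∀ {q : Fin 3 → ℕ → ℝ} {β : ℕ → Fin 3}, IsPosStochastic q → Xval q β = 0 →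
      bq q (β 0) 0 = 0 ∧ Xval (fun i k => q i (k + 1)) (fun k => β (k + 1)) = 0 := by
    intro q β hq h
    rw [Xval_eq_add_mul hq] at h
    have hs := Xval_mem_Icc hq.shift (fun k => β (k + 1))
    have hb := (bq_mem_Icc hq (β 0) 0).1.1
    have hp := hq.pos (β 0) 0
    constructor <;> nlinarith [hs.1, hs.2]
  induction j generalizing q β with
  | zero => exact eq_zero_of_bq_eq_zero hq (step hq h).1
  | succ j ih => exact ih hq.shift (step hq h).2

end Xval

section Lex

variable {q : Fin 3 → ℕ → ℝ} {ε : ℕ → ℝ} {β γ : ℕ → Fin 3}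

theorem Xval_le_of_digit_lt (hq : IsPosStochastic q) (h : β 0 < γ 0) : Xval q β ≤ Xval q γ := by
  rw [Xval_eq_add_mul hq β, Xval_eq_add_mul hq γ]
  have hs := (Xval_mem_Icc hq.shift (fun k => β (k + 1))).2
  have ht := (Xval_mem_Icc hq.shift (fun k => γ (k + 1))).1
  nlinarith [bq_add_le_bq hq h 0, hq.pos (β 0) 0, hq.pos (γ 0) 0]

theorem F_eq_of_digit_lt_of_Xval_eq (hq : IsPosStochastic q)
    (hε : ∀ k, ε k ∈ Set.Icc (0 : ℝ) 1) (h : β 0 < γ 0) (heq : Xval q β = Xval q γ) :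
    F ε β = F ε γ := by
  rw [Xval_eq_add_mul hq β, Xval_eq_add_mul hq γ] at heq
  set s := Xval (fun i k => q i (k + 1)) (fun k => β (k + 1))
  set t := Xval (fun i k => q i (k + 1)) (fun k => γ (k + 1))
  have hs := Xval_mem_Icc hq.shift (fun k => β (k + 1))
  have ht := Xval_mem_Icc hq.shift (fun k => γ (k + 1))
  have hle := bq_add_le_bq hq h 0
  have hpβ := hq.pos (β 0) 0
  have hpγ := hq.pos (γ 0) 0
  -- equality squeezes `bqᵢ + qᵢ s ≤ bqᵢ + qᵢ ≤ bqⱼ ≤ bqⱼ + qⱼ t`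
  have hs1 : s = 1 := by nlinarith [hs.1, hs.2, ht.1, ht.2]
  have ht0 : t = 0 := by nlinarith [hs.1, hs.2, ht.1, ht.2]
  have hadj : bq q (β 0) 0 + q (β 0) 0 = bq q (γ 0) 0 := by
    rw [hs1, ht0] at heq
    linarith
  have hβ : (fun k => β (k + 1)) = fun _ => 2 := funext (eq_two_of_Xval_eq_one hq.shift hs1)
  have hγ : (fun k => γ (k + 1)) = fun _ => 0 := funext (eq_zero_of_Xval_eq_zero hq.shift ht0)
  rw [F_eq_add_mul hε β, F_eq_add_mul hε γ, hβ, hγ, F_const_two fun k => hε (k + 1), F_const_zero,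
    mul_one, mul_zero, add_zero, dq_add_gq_eq_of_bq_add_eq hq ε h hadj]

theorem Xval_le_of_lex_s14 (hq : IsPosStochastic q) {k : ℕ} (hk : ∀ j < k, β j = γ j)
    (h : β k < γ k) : Xval q β ≤ Xval q γ := by
  induction k generalizing q β γ with
  | zero => exact Xval_le_of_digit_lt hq h
  | succ k ih =>
    have htail := ih hq.shift (fun j hj => hk (j + 1) (by omega)) h
    rw [Xval_eq_add_mul hq β, Xval_eq_add_mul hq γ, hk 0 k.succ_pos]
    exact add_le_add_right (mul_le_mul_of_nonneg_left htail (hq.pos _ _).le) _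

theorem F_eq_of_lex_of_Xval_eq (hq : IsPosStochastic q) (hε : ∀ k, ε k ∈ Set.Icc (0 : ℝ) 1)
    {k : ℕ} (hk : ∀ j < k, β j = γ j) (h : β k < γ k) (heq : Xval q β = Xval q γ) :
    F ε β = F ε γ := by
  induction k generalizing q ε β γ with
  | zero => exact F_eq_of_digit_lt_of_Xval_eq hq hε h heq
  | succ k ih =>
    have h0 := hk 0 k.succ_pos
    rw [Xval_eq_add_mul hq β, Xval_eq_add_mul hq γ, h0] at heq
    have htail := ih hq.shift (fun k => hε (k + 1)) (fun j hj => hk (j + 1) (by omega)) h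
      (mul_left_cancel₀ (hq.pos _ _).ne' (add_left_cancel heq))
    rw [F_eq_add_mul hε β, F_eq_add_mul hε γ, h0, htail]

theorem F_eq_of_Xval_eq (hq : IsPosStochastic q) (hε : ∀ k, ε k ∈ Set.Icc (0 : ℝ) 1)
    (h : Xval q β = Xval q γ) : F ε β = F ε γ := by
  by_cases hβγ : β = γ
  · rw [hβγ]
  have hex : ∃ k, β k ≠ γ k := Function.ne_iff.mp hβγ
  have hagree : ∀ j < Nat.find hex, β j = γ j := fun j hj => not_not.mp (Nat.find_min hex hj)
  rcases (Nat.find_spec hex).lt_or_gt with hlt | hgt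
  · exact F_eq_of_lex_of_Xval_eq hq hε hagree hlt h
  · exact (F_eq_of_lex_of_Xval_eq hq hε (fun j hj => (hagree j hj).symm) hgt h.symm).symm

end Lex

/-- The digit sequence `c₀ … c_{m-1} (i)`: the first `m` digits of `c`, then `i` forever. -/
def prefixThen (c : ℕ → Fin 3) (m : ℕ) (i : Fin 3) : ℕ → Fin 3 := fun k => if k < m then c k else i

section Cylinder

variable {q : Fin 3 → ℕ → ℝ} {ε : ℕ → ℝ}

theorem prefixThen_zero (c : ℕ → Fin 3) (i : Fin 3) : prefixThen c 0 i = fun _ => i := by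
  funext k
  simp [prefixThen]

theorem prefixThen_succ_apply_zero (c : ℕ → Fin 3) (m : ℕ) (i : Fin 3) :
    prefixThen c (m + 1) i 0 = c 0 := by
  simp [prefixThen]

theorem prefixThen_succ_tail (c : ℕ → Fin 3) (m : ℕ) (i : Fin 3) :
    (fun k => prefixThen c (m + 1) i (k + 1)) = prefixThen (fun k => c (k + 1)) m i := by
  funext k
  simp [prefixThen]

theorem prod_range_succ_gq (ε : ℕ → ℝ) (c : ℕ → Fin 3) (m : ℕ) :
    ∏ j ∈ range (m + 1), gq ε (c j) j =
      gq ε (c 0) 0 * ∏ j ∈ range m, gq (fun k => ε (k + 1)) (c (j + 1)) j := by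
  rw [prod_range_succ', mul_comm]
  rfl

theorem Xval_prefixThen_zero_le_two (hq : IsPosStochastic q) (c : ℕ → Fin 3) (m : ℕ) :
    Xval q (prefixThen c m 0) ≤ Xval q (prefixThen c m 2) :=
  Xval_le_of_lex_s14 hq (k := m) (fun j hj => by simp [prefixThen, hj]) (by simp [prefixThen])

theorem F_prefixThen_two (hε : ∀ k, ε k ∈ Set.Icc (0 : ℝ) 1) (c : ℕ → Fin 3) (m : ℕ) :
    F ε (prefixThen c m 2) = F ε (prefixThen c m 0) + ∏ j ∈ range m, gq ε (c j) j := by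
  induction m generalizing ε c with
  | zero => simp [prefixThen_zero, F_const_two hε, F_const_zero]
  | succ m ih =>
    rw [F_eq_add_mul hε, F_eq_add_mul hε (prefixThen c (m + 1) 0), prefixThen_succ_apply_zero,
      prefixThen_succ_apply_zero, prefixThen_succ_tail, prefixThen_succ_tail,
      ih (fun k => hε (k + 1)), prod_range_succ_gq]
    ring

theorem exists_F_eq_of_mem_cylinder (hq : IsPosStochastic q) (hε : ∀ k, ε k ∈ Set.Icc (0 : ℝ) 1)
    (c : ℕ → Fin 3) (m : ℕ) {γ : ℕ → Fin 3} (h0 : Xval q (prefixThen c m 0) ≤ Xval q γ)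
    (h2 : Xval q γ ≤ Xval q (prefixThen c m 2)) :
    ∃ t ∈ Set.Icc (0 : ℝ) 1,
      F ε γ = F ε (prefixThen c m 0) + (∏ j ∈ range m, gq ε (c j) j) * t := by
  induction m generalizing q ε c γ with
  | zero => exact ⟨F ε γ, F_mem_Icc hε γ, by simp [prefixThen_zero, F_const_zero]⟩
  | succ m ih =>
    rcases lt_trichotomy (γ 0) (c 0) with hlt | heq | hgt
    · have hx : Xval q γ = Xval q (prefixThen c (m + 1) 0) :=
        le_antisymm (Xval_le_of_digit_lt hq (by rwa [prefixThen_succ_apply_zero])) h0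
      exact ⟨0, ⟨le_rfl, zero_le_one⟩, by rw [F_eq_of_Xval_eq hq hε hx]; ring⟩
    · rw [Xval_eq_add_mul hq γ, Xval_eq_add_mul hq (prefixThen c (m + 1) 0),
        prefixThen_succ_apply_zero, prefixThen_succ_tail, heq] at h0
      rw [Xval_eq_add_mul hq γ, Xval_eq_add_mul hq (prefixThen c (m + 1) 2),
        prefixThen_succ_apply_zero, prefixThen_succ_tail, heq] at h2
      obtain ⟨t, ht, hF⟩ := ih hq.shift (fun k => hε (k + 1)) (fun k => c (k + 1))
        (le_of_mul_le_mul_left (add_le_add_iff_left _ |>.1 h0) (hq.pos _ _))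
        (le_of_mul_le_mul_left (add_le_add_iff_left _ |>.1 h2) (hq.pos _ _))
      refine ⟨t, ht, ?_⟩
      rw [F_eq_add_mul hε γ, F_eq_add_mul hε (prefixThen c (m + 1) 0), prefixThen_succ_apply_zero,
        prefixThen_succ_tail, heq, hF, prod_range_succ_gq]
      ring
    · have hx : Xval q γ = Xval q (prefixThen c (m + 1) 2) :=
        le_antisymm h2 (Xval_le_of_digit_lt hq (by rwa [prefixThen_succ_apply_zero]))
      exact ⟨1, ⟨zero_le_one, le_rfl⟩, by
        rw [F_eq_of_Xval_eq hq hε hx, F_prefixThen_two hε]; ring⟩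

end Cylinder

theorem stmt14 (q : Fin 3 → ℕ → ℝ) (hq : ∀ i k, 0 < q i k)
    (hsum : ∀ k, q 0 k + q 1 k + q 2 k = 1)
    (ε : ℕ → ℝ) (hε : ∀ k, 0 ≤ ε k ∧ ε k ≤ 1)
    (α : ℝ → ℕ → Fin 3) (hα : ∀ x ∈ Set.Icc (0 : ℝ) 1, Xval q (α x) = x)
    (m : ℕ) (c : ℕ → Fin 3) :
    let f : ℝ → ℝ := fun x => F ε (α x)
    let x0 : ℝ := Xval q (fun k => if k < m then c k else 0)
    let x2 : ℝ := Xval q (fun k => if k < m then c k else 2)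
    let μ : ℝ := ∏ j ∈ Finset.range m, gq ε (c j) j
    (0 < μ → IsGreatest (f '' Set.Icc x0 x2) (f x2) ∧
             IsLeast (f '' Set.Icc x0 x2) (f x0)) ∧
    (μ < 0 → IsGreatest (f '' Set.Icc x0 x2) (f x0) ∧
             IsLeast (f '' Set.Icc x0 x2) (f x2)) := by
  intro f x0 x2 μ
  have hQ : IsPosStochastic q := ⟨hq, hsum⟩
  have hx02 : x0 ≤ x2 := Xval_prefixThen_zero_le_two hQ c m
  have hcyl : Set.Icc x0 x2 ⊆ Set.Icc 0 1 :=
    Set.Icc_subset_Icc (Xval_mem_Icc hQ _).1 (Xval_mem_Icc hQ _).2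
  have hx0 : x0 ∈ Set.Icc x0 x2 := ⟨le_rfl, hx02⟩
  have hx2 : x2 ∈ Set.Icc x0 x2 := ⟨hx02, le_rfl⟩
  have hf0 : f x0 = F ε (prefixThen c m 0) := F_eq_of_Xval_eq hQ hε (hα x0 (hcyl hx0))
  have hf2 : f x2 = f x0 + μ :=
    (F_eq_of_Xval_eq hQ hε (hα x2 (hcyl hx2))).trans (hf0 ▸ F_prefixThen_two hε c m)
  have hf : ∀ x ∈ Set.Icc x0 x2, ∃ t ∈ Set.Icc (0 : ℝ) 1, f x = f x0 + μ * t := by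
    intro x hx
    have hαx := hα x (hcyl hx)
    rw [hf0]
    exact exists_F_eq_of_mem_cylinder hQ hε c m (hαx.symm ▸ hx.1) (hαx.symm ▸ hx.2)
  refine ⟨fun hμ => ⟨⟨⟨x2, hx2, rfl⟩, ?_⟩, ⟨x0, hx0, rfl⟩, ?_⟩,
    fun hμ => ⟨⟨⟨x0, hx0, rfl⟩, ?_⟩, ⟨x2, hx2, rfl⟩, ?_⟩⟩ <;>
  · rintro _ ⟨x, hx, rfl⟩
    obtain ⟨t, ⟨ht0, ht1⟩, hfx⟩ := hf x hx
    rw [hfx]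
    nlinarith
end
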